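/- Let A ∈ ℝ^{N×N} be stable, C ∈ ℝ^{q×N}, and let X be the unique solution of the Lyapunov equation AᵀX + XA = −CᵀC. Then for every x₀ ∈ ℝ^N, the total output energy of the homogeneous system ẋ = Ax, y = Cx, x(0) = x₀ satisfies ∫₀^∞ ‖C·exp(At)·x₀‖² dt = x₀ᵀ X x₀, where ‖·‖ is the Euclidean norm. -/

import Mathlib

/-!
Along a trajectory `x(t) = exp(tA) x₀` the Lyapunov equation gives
`d/dt (x(t)ᵀ X x(t)) = -‖C x(t)‖²`, so the output energy on `[0, T]` is `x₀ᵀ X x₀ - x(T)ᵀ X x(T)`.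
Stability forces `exp(tA) → 0`: on a generalized eigenspace of `A` over `ℂ` for the eigenvalue `μ`,
`exp(tA)` acts as `e^{tμ}` times a polynomial in `t`, and `Re μ < 0`. Since the integrand is
nonnegative, the improper integral is the limit `x₀ᵀ X x₀`.
-/

open Matrix MeasureTheory

/-- A real square matrix is stable if every eigenvalue (as a complex matrix)
has negative real part. -/
def Matrix.IsStable {n : Type*} [Fintype n] [DecidableEq n] (A : Matrix n n ℝ) : Prop :=
  ∀ z ∈ spectrum ℂ (A.map (Complex.ofReal · )), z.re < 0

open Filter Topology Finset Nat

theorem Complex.tendsto_exp_ofReal_mul_mul_pow_atTop {μ : ℂ} (hμ : μ.re < 0) (j : ℕ) :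
    Tendsto (fun t : ℝ => Complex.exp (t * μ) * (t : ℂ) ^ j) atTop (𝓝 0) := by
  rw [tendsto_zero_iff_norm_tendsto_zero]
  refine (tendsto_rpow_mul_exp_neg_mul_atTop_nhds_zero j (-μ.re) (neg_pos.2 hμ)).congr' ?_
  filter_upwards [eventually_ge_atTop 0] with t ht
  rw [norm_mul, Complex.norm_exp, norm_pow, Complex.norm_real, Real.norm_of_nonneg ht,
    Real.rpow_natCast, Complex.re_ofReal_mul]
  ring_nf

section MatrixExponential

-- Any norm on matrices would do: `exp` and the topology on matrices do not depend on the choice.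
attribute [local instance] Matrix.linftyOpNormedRing Matrix.linftyOpNormedAlgebra

variable {𝕂 n : Type*} [RCLike 𝕂] [Fintype n] [DecidableEq n]

theorem Matrix.exp_smul_mulVec_eq_sum_of_pow_mulVec_eq_zero {D : Matrix n n 𝕂} {w : n → 𝕂}
    {k : ℕ} (hw : D ^ k *ᵥ w = 0) (t : 𝕂) :
    NormedSpace.exp (t • D) *ᵥ w = ∑ j ∈ range k, (t ^ j / j !) • (D ^ j *ᵥ w) := by
  let L := (mulVecBilin 𝕂 𝕂 : Matrix n n 𝕂 →ₗ[𝕂] _).flip w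
  have hL : ∀ E, L E = E *ᵥ w := fun _ => rfl
  have hterm : ∀ j, L ((j ! : 𝕂)⁻¹ • (t • D) ^ j) = (t ^ j / j !) • (D ^ j *ᵥ w) := fun j => by
    rw [hL, smul_pow, smul_smul, smul_mulVec, div_eq_inv_mul]
  have hsum := (NormedSpace.expSeries_summable' (𝕂 := 𝕂) (t • D)).hasSum.map L
    (LinearMap.continuous_of_finiteDimensional L)
  rw [NormedSpace.exp_eq_tsum 𝕂, ← hL]
  refine (hsum.unique (hasSum_sum_of_ne_finset_zero fun j hj => ?_)).trans
    (sum_congr rfl fun j _ => hterm j)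
  obtain ⟨m, rfl⟩ := Nat.exists_eq_add_of_le' (not_lt.mp (mem_range.not.mp hj))
  rw [Function.comp_apply, hterm, pow_add D, ← mulVec_mulVec, hw, mulVec_zero, smul_zero]

theorem Matrix.exp_smul_eq_exp_mul_smul_exp_smul_sub (B : Matrix n n 𝕂) (μ t : 𝕂) :
    NormedSpace.exp (t • B) = NormedSpace.exp (t * μ) • NormedSpace.exp (t • (B - μ • 1)) := by
  have hsplit : t • B = algebraMap 𝕂 _ (t * μ) + t • (B - μ • 1) := by
    rw [Algebra.algebraMap_eq_smul_one, smul_sub, smul_smul]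
    abel
  rw [hsplit, Matrix.exp_add_of_commute _ _ (Algebra.commute_algebraMap_left _ _),
    Algebra.smul_def (NormedSpace.exp (t * μ))]
  exact congrArg (· * NormedSpace.exp (t • (B - μ • 1)))
    (NormedSpace.algebraMap_exp_comm (t * μ)).symm

theorem Matrix.tendsto_exp_smul_mulVec_of_pow_sub_smul_mulVec_eq_zero {B : Matrix n n ℂ} {μ : ℂ}
    (hμ : μ.re < 0) {w : n → ℂ} {k : ℕ} (hw : (B - μ • 1) ^ k *ᵥ w = 0) :
    Tendsto (fun t : ℝ => NormedSpace.exp ((t : ℂ) • B) *ᵥ w) atTop (𝓝 0) := by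
  have hexpand : ∀ t : ℝ, NormedSpace.exp ((t : ℂ) • B) *ᵥ w =
      ∑ j ∈ range k, (Complex.exp (t * μ) * (t : ℂ) ^ j / j !) • ((B - μ • 1) ^ j *ᵥ w) := by
    intro t
    rw [exp_smul_eq_exp_mul_smul_exp_smul_sub B μ, smul_mulVec,
      exp_smul_mulVec_eq_sum_of_pow_mulVec_eq_zero hw, smul_sum, ← Complex.exp_eq_exp_ℂ]
    simp_rw [smul_smul, mul_div_assoc]
  simp_rw [hexpand]
  simpa using tendsto_finsetSum (range k) fun j _ =>
    ((Complex.tendsto_exp_ofReal_mul_mul_pow_atTop hμ j).div_const (j ! : ℂ)).smul_const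
      ((B - μ • 1) ^ j *ᵥ w)

theorem Matrix.tendsto_exp_smul_mulVec_of_forall_re_neg {B : Matrix n n ℂ}
    (hB : ∀ z ∈ spectrum ℂ B, z.re < 0) (v : n → ℂ) :
    Tendsto (fun t : ℝ => NormedSpace.exp ((t : ℂ) • B) *ᵥ v) atTop (𝓝 0) := by
  have hv : v ∈ ⨆ μ, Module.End.maxGenEigenspace (toLin' B) μ := by
    rw [Module.End.iSup_maxGenEigenspace_eq_top]
    trivial
  induction hv using Submodule.iSup_induction' with
  | mem μ w hw =>
    obtain rfl | hw0 := eq_or_ne w 0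
    · simp
    obtain ⟨k, hk⟩ := (Module.End.mem_maxGenEigenspace _ _ _).1 hw
    have hμ : μ ∈ spectrum ℂ B := by
      rw [← Matrix.spectrum_toLin', ← Module.End.hasEigenvalue_iff_mem_spectrum]
      exact Module.End.HasUnifEigenvalue.lt zero_lt_one
        ((Submodule.ne_bot_iff _).2 ⟨w, hw, hw0⟩)
    refine tendsto_exp_smul_mulVec_of_pow_sub_smul_mulVec_eq_zero (hB μ hμ) (k := k) ?_
    rwa [show toLin' B - μ • 1 = toLinAlgEquiv' (B - μ • 1) by simp [map_sub, map_smul]; rfl,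
      ← map_pow, toLinAlgEquiv'_apply] at hk
  | zero => simp
  | add v w _ _ hv hw => simpa [mulVec_add] using hv.add hw

theorem Matrix.tendsto_exp_smul_of_forall_re_neg {B : Matrix n n ℂ}
    (hB : ∀ z ∈ spectrum ℂ B, z.re < 0) :
    Tendsto (fun t : ℝ => NormedSpace.exp ((t : ℂ) • B)) atTop (𝓝 0) :=
  tendsto_pi_nhds.2 fun i => tendsto_pi_nhds.2 fun j => by
    simpa [mulVec_single_one] using
      tendsto_pi_nhds.1 (tendsto_exp_smul_mulVec_of_forall_re_neg hB (Pi.single j 1)) i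

theorem Matrix.map_ofReal_exp (A : Matrix n n ℝ) :
    (NormedSpace.exp A).map Complex.ofReal = NormedSpace.exp (A.map Complex.ofReal) :=
  NormedSpace.map_exp (Complex.ofRealHom.mapMatrix : Matrix n n ℝ →+* Matrix n n ℂ)
    (continuous_id.matrix_map Complex.continuous_ofReal) A

theorem Matrix.IsStable.tendsto_exp_smul {A : Matrix n n ℝ} (hA : A.IsStable) :
    Tendsto (fun t : ℝ => NormedSpace.exp (t • A)) atTop (𝓝 0) := by
  have hre : ∀ t : ℝ, NormedSpace.exp (t • A) =
      (NormedSpace.exp ((t : ℂ) • A.map Complex.ofReal)).map Complex.re := fun t => by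
    have hsmul : (t : ℂ) • A.map Complex.ofReal = (t • A).map Complex.ofReal := by
      ext
      simp
    rw [hsmul, ← map_ofReal_exp, Matrix.map_map]
    exact (Matrix.map_id _).symm
  exact (((continuous_id.matrix_map Complex.continuous_re).tendsto 0).comp
    (tendsto_exp_smul_of_forall_re_neg hA)).congr fun t => (hre t).symm

theorem HasDerivAt.dotProduct_mulVec {P : 𝕂 → Matrix n n 𝕂} {P' : Matrix n n 𝕂} {t : 𝕂}
    (hP : HasDerivAt P P' t) (x y : n → 𝕂) :
    HasDerivAt (fun s => x ⬝ᵥ P s *ᵥ y) (x ⬝ᵥ P' *ᵥ y) t := by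
  let L : Matrix n n 𝕂 →ₗ[𝕂] 𝕂 :=
    { toFun := fun M => x ⬝ᵥ M *ᵥ y
      map_add' := fun M M' => by simp only [add_mulVec, dotProduct_add]
      map_smul' := fun c M => by simp only [smul_mulVec, dotProduct_smul, RingHom.id_apply] }
  exact L.toContinuousLinearMap.hasFDerivAt.comp_hasDerivAt t hP

theorem Matrix.hasDerivAt_dotProduct_transpose_exp_mul_mul_exp_mulVec
    (A X : Matrix n n 𝕂) (x : n → 𝕂) (t : 𝕂) :
    HasDerivAt (fun s => x ⬝ᵥ ((NormedSpace.exp (s • A))ᵀ * X * NormedSpace.exp (s • A)) *ᵥ x)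
      (x ⬝ᵥ ((NormedSpace.exp (t • A))ᵀ * (Aᵀ * X + X * A) * NormedSpace.exp (t • A)) *ᵥ x) t := by
  refine HasDerivAt.dotProduct_mulVec ?_ x x
  simp_rw [← Matrix.exp_transpose, transpose_smul]
  exact (((hasDerivAt_exp_smul_const Aᵀ t).mul_const X).mul
    (hasDerivAt_exp_smul_const' A t)).congr_deriv (by noncomm_ring)

end MatrixExponential

theorem Matrix.sum_mulVec_sq {m n R : Type*} [Fintype m] [Fintype n] [CommSemiring R]
    (M : Matrix m n R) (x : n → R) : ∑ i, (M *ᵥ x) i ^ 2 = x ⬝ᵥ (Mᵀ * M) *ᵥ x := by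
  rw [← mulVec_mulVec, dotProduct_mulVec, vecMul_transpose]
  simp only [dotProduct, sq]

theorem total_output_energy_eq_quadratic_form (N q : ℕ)
    (A : Matrix (Fin N) (Fin N) ℝ) (hA : A.IsStable)
    (C : Matrix (Fin q) (Fin N) ℝ)
    (X : Matrix (Fin N) (Fin N) ℝ)
    (hX : Aᵀ * X + X * A = -(Cᵀ * C)) :
    ∀ x₀ : Fin N → ℝ,
      (∫ t in Set.Ioi (0 : ℝ),
          ∑ i, ((C * NormedSpace.exp (t • A)) *ᵥ x₀) i ^ 2) =
        x₀ ⬝ᵥ (X *ᵥ x₀) := by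
  intro x₀
  set V : ℝ → ℝ := fun s =>
    -(x₀ ⬝ᵥ ((NormedSpace.exp (s • A))ᵀ * X * NormedSpace.exp (s • A)) *ᵥ x₀) with hV
  have hderiv : ∀ t, HasDerivAt V (∑ i, ((C * NormedSpace.exp (t • A)) *ᵥ x₀) i ^ 2) t := by
    intro t
    refine (hasDerivAt_dotProduct_transpose_exp_mul_mul_exp_mulVec A X x₀ t).neg.congr_deriv ?_
    rw [hX, sum_mulVec_sq, transpose_mul, Matrix.mul_neg, Matrix.neg_mul, neg_mulVec,
      dotProduct_neg, neg_neg]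
    simp only [Matrix.mul_assoc]
  have hlim : Tendsto V atTop (𝓝 0) := by
    have hcont : Continuous fun M : Matrix (Fin N) (Fin N) ℝ => -(x₀ ⬝ᵥ (Mᵀ * X * M) *ᵥ x₀) :=
      by fun_prop
    exact (hcont.tendsto' 0 0 (by simp)).comp hA.tendsto_exp_smul
  rw [integral_Ioi_of_hasDerivAt_of_nonneg' (fun t _ => hderiv t)
    (fun t _ => sum_nonneg fun i _ => sq_nonneg _) hlim]
  simp [hV]
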